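/- The Λ-duplicate D is not a Gruenhage space. -/

import Mathlib

/-- An element of Kurepa's tree `Λ`: an injective function `t : α → ω` with countable
ordinal domain `α` and coinfinite range.  The function is represented as a total function
on ordinals which takes the junk value `0` outside of the domain. -/
structure Lambda : Type 1 where
  toFun : Ordinal.{0} → ℕ
  dom : Ordinal.{0}
  countable : dom.card ≤ Cardinal.aleph0
  inj : ∀ β γ, β < dom → γ < dom → toFun β = toFun γ → β = γ
  coinfinite : {n : ℕ | ∀ β, β < dom → toFun β ≠ n}.Infinite
  junk : ∀ β, ¬ β < dom → toFun β = 0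

/-- The tree order on `Λ`: `s ≼ t` iff `t` extends `s`. -/
def Lambda.le (s t : Lambda) : Prop :=
  s.dom ≤ t.dom ∧ ∀ β, β < s.dom → s.toFun β = t.toFun β

/-- The strict tree order on `Λ`. -/
def Lambda.lt (s t : Lambda) : Prop := Lambda.le s t ∧ s ≠ t

/-- `r ≺ s` for `r ∈ Λ ∪ {0}` (`none` plays the role of the extra least element `0`). -/
def precLt : Option Lambda → Lambda → Prop
  | none, _ => True
  | some r, s => Lambda.lt r s

/-- The interval `(r, t] = {s ∈ Λ : r ≺ s ≼ t}`, with `r ∈ Λ ∪ {0}`. -/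
def lamIoc (r : Option Lambda) (t : Lambda) : Set Lambda :=
  {s | precLt r s ∧ Lambda.le s t}

/-- The position of the minimum of `t` on the ordinal interval `[δ, β)`. -/
noncomputable def minPos (t : Ordinal.{0} → ℕ) (δ β : Ordinal.{0}) : Ordinal.{0} :=
  sInf {ξ | δ ≤ ξ ∧ ξ < β ∧ ∀ η, δ ≤ η → η < β → t ξ ≤ t η}

lemma minPos_lt (t : Ordinal.{0} → ℕ) {δ β : Ordinal.{0}} (h : δ < β) : minPos t δ β < β := by
  have hne : {ξ : Ordinal.{0} | δ ≤ ξ ∧ ξ < β ∧ ∀ η, δ ≤ η → η < β → t ξ ≤ t η}.Nonempty := by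
    have h1 : {n : ℕ | ∃ ξ : Ordinal.{0}, δ ≤ ξ ∧ ξ < β ∧ t ξ = n}.Nonempty :=
      ⟨t δ, δ, le_refl _, h, rfl⟩
    obtain ⟨ξ, hξ1, hξ2, hξ3⟩ := Nat.sInf_mem h1
    refine ⟨ξ, hξ1, hξ2, fun η h1' h2' => ?_⟩
    rw [hξ3]
    exact Nat.sInf_le ⟨η, h1', h2', rfl⟩
  obtain ⟨ξ, hξ⟩ := hne
  calc minPos t δ β ≤ ξ := csInf_le (OrderBot.bddBelow _) hξ
    _ < β := hξ.2.1

/-- The sequence `τ` computed from the starting ordinal `β₀` downwards: `τ` is obtained by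
repeatedly passing from `β` to the position of the minimum of `t` on `[δ, β)`, stopping upon
reaching `δ`.  The resulting finite sequence `(β_k, …, β_1)` is recorded as a list in the
order `[β_k, …, β_1]` (so concatenation of the lists corresponds to `⌢`). -/
noncomputable def tauFrom (δ : Ordinal.{0}) (t : Ordinal.{0} → ℕ) : Ordinal.{0} → List Ordinal.{0} :=
  WellFounded.fix wellFounded_lt
    (fun β IH => if h : δ < β then IH (minPos t δ β) (minPos_lt t h) ++ [minPos t δ β] else [])

/-- The finite sequence `τ(s,t)` of ordinals, for `s ≼ t` in `Λ`. -/
noncomputable def tau (s t : Lambda) : List Ordinal.{0} :=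
  tauFrom s.dom t.toFun t.dom

/-- `ℓ(s,t)`, the length of `τ(s,t)`. -/
noncomputable def ell (s t : Lambda) : ℕ := (tau s t).length

/-- The underlying set of the `Λ`-duplicate: `D = Λ × {1, -1}`. -/
abbrev Dup : Type 1 := Lambda × ℤˣ

/-- The basic open sets `W(r,t,i)` of the `Λ`-duplicate. -/
noncomputable def Wset (r : Option Lambda) (t : Lambda) (i : ℤˣ) : Set Dup :=
  {q | q.1 ∈ lamIoc r t ∧ q.2 = (-1) ^ ell q.1 t * i}

/-- The collection of all basic open sets `W(r,t,i)` with `r ≺ t`. -/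
noncomputable def WBasis : Set (Set Dup) :=
  {S | ∃ (r : Option Lambda) (t : Lambda) (i : ℤˣ), precLt r t ∧ S = Wset r t i}

/-- The topology of the `Λ`-duplicate, generated by the basic sets `W(r,t,i)`. -/
noncomputable instance : TopologicalSpace Dup := TopologicalSpace.generateFrom WBasis

/-- A topological space is Gruenhage if there are a sequence `(𝒰 n)` of families of open sets
and sets `R n` such that any two distinct points are separated by some member of some `𝒰 n`
(i.e. `{x,y} ∩ U` is a singleton), and two distinct members of `𝒰 n` always intersect
exactly in `R n`. -/
def Gruenhage (X : Type*) [TopologicalSpace X] : Prop :=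
  ∃ (U : ℕ → Set (Set X)) (R : ℕ → Set X),
    (∀ n, ∀ V ∈ U n, IsOpen V) ∧
    (∀ x y : X, x ≠ y → ∃ n, ∃ V ∈ U n, ∃ z, ({x, y} : Set X) ∩ V = {z}) ∧
    (∀ n, ∀ V ∈ U n, ∀ V' ∈ U n, V ≠ V' → V ∩ V' = R n)

/-!
Suppose `(𝒰 n, R n)` witnessed that `D` is Gruenhage. Separating the twins `(t, 1)` and
`(t, -1)` gives, for each `t ∈ Λ`, some `V t ∈ 𝒰 (n t)` containing `(t, i t)` but not `(t, -i t)`,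
and `V t` contains a basic set `W(r t, t, i t)`, which contains every `(s, -i t)` with
`s ∈ (r t, t]` and `ℓ(s, t) = 1`. Now suppose `x ≺ y ≺ u` have the same colour `(n, i)`, pairwise
`ℓ = 1` and `x, y` above the relevant `r`'s. Then `(y, -i) ∈ V u \ V y`, so `V y ≠ V u` and
`(x, -i) ∈ V y ∩ V u = R n`; as `(x, -i) ∉ V x`, also `V x ≠ V y`, so `(x, -i) ∈ V x ∩ V y`,
a contradiction.

Such a triple exists for every countable colouring. Build `u` as the union of a chain
`T 0 ≺ T 1 ≺ ⋯`, where `T (k + 1)` appends one value to an element `v k` adopted at stage `k`;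
the appended values come from shrinking pools and each is smaller than all later ones, so
`ℓ(v k, u) = 1`. Stage `k` adopts, when possible, an element meeting the `k`-th scheduled
requirement, and `u` itself is always a candidate. Hence `u` gets one-step predecessors of its
own colour cofinally below it, and then so does some adopted `y`, which yields `x`.
-/

theorem mem_or_mem_of_inter_eq_singleton {X : Type*} {x y z : X} {V : Set X} (hxy : x ≠ y)
    (h : {x, y} ∩ V = {z}) : (x ∈ V ∧ y ∉ V) ∨ (y ∈ V ∧ x ∉ V) := by
  have hz : z ∈ ({x, y} : Set X) ∩ V := h ▸ rfl
  have huniq : ∀ w ∈ ({x, y} : Set X), w ∈ V → w = z := fun w hw hwV =>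
    (h ▸ ⟨hw, hwV⟩ : w ∈ ({z} : Set X))
  rcases hz with ⟨rfl | rfl, hzV⟩
  · exact .inl ⟨hzV, fun hy => hxy (huniq y (by simp) hy).symm⟩
  · exact .inr ⟨hzV, fun hx => hxy (huniq x (by simp) hx)⟩

theorem mem_of_pairwise_inter_eq {X : Type*} {𝒰 : Set (Set X)} {R : Set X}
    (h𝒰 : ∀ V ∈ 𝒰, ∀ V' ∈ 𝒰, V ≠ V' → V ∩ V' = R) {A B C : Set X} (hA : A ∈ 𝒰) (hB : B ∈ 𝒰)
    (hC : C ∈ 𝒰) {p q : X} (hpB : p ∈ B) (hpC : p ∈ C) (hqB : q ∉ B) (hqC : q ∈ C) : p ∈ A := by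
  have hpR : p ∈ R := h𝒰 B hB C hC (fun e => hqB (e ▸ hqC)) ▸ ⟨hpB, hpC⟩
  by_cases hAB : A = B
  · exact hAB ▸ hpB
  · exact (h𝒰 A hA B hB hAB ▸ hpR : p ∈ A ∩ B).1

theorem exists_seq_forall_exists_ge_eq (β : Type*) [Countable β] [Nonempty β] :
    ∃ g : ℕ → β, ∀ b k₀, ∃ k ≥ k₀, g k = b := by
  obtain ⟨f, hf⟩ := exists_surjective_nat β
  refine ⟨fun k => f k.unpair.1, fun b k₀ => ?_⟩
  obtain ⟨m, rfl⟩ := hf b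
  exact ⟨Nat.pair m k₀, Nat.right_le_pair m k₀, by simp⟩

theorem Set.Infinite.sep_lt {S : Set ℕ} (hS : S.Infinite) (n : ℕ) : {q ∈ S | n < q}.Infinite :=
  (hS.sdiff (Set.finite_Iic n)).mono fun _ hq => ⟨hq.1, not_le.1 hq.2⟩

namespace Lambda

theorem eq_of_le_of_dom_eq {s t : Lambda} (h : s.le t) (hd : s.dom = t.dom) : s = t := by
  obtain ⟨f, d, _, _, _, hf⟩ := s
  obtain ⟨g, _, _, _, _, hg⟩ := t
  subst hd
  simp only [mk.injEq, and_true]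
  funext β
  by_cases hβ : β < d
  · exact h.2 β hβ
  · rw [hf β hβ, hg β hβ]

instance : PartialOrder Lambda where
  le := Lambda.le
  lt := Lambda.lt
  le_refl _ := ⟨le_rfl, fun _ _ => rfl⟩
  le_trans _ _ _ h₁ h₂ :=
    ⟨h₁.1.trans h₂.1, fun β hβ => (h₁.2 β hβ).trans (h₂.2 β (hβ.trans_le h₁.1))⟩
  lt_iff_le_not_ge _ _ :=
    ⟨fun h => ⟨h.1, fun h' => h.2 (eq_of_le_of_dom_eq h.1 (le_antisymm h.1.1 h'.1))⟩,
      fun h => ⟨h.1, fun he => h.2 (he ▸ ⟨le_rfl, fun _ _ => rfl⟩)⟩⟩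
  le_antisymm _ _ h h' := eq_of_le_of_dom_eq h (le_antisymm h.1 h'.1)

variable {s t u : Lambda}

theorem apply_eq_of_le (h : s ≤ t) {β : Ordinal} (hβ : β < s.dom) : s.toFun β = t.toFun β :=
  h.2 β hβ

theorem lt_iff_le_and_dom_lt : s < t ↔ s ≤ t ∧ s.dom < t.dom :=
  ⟨fun h => ⟨h.le, h.le.1.lt_of_ne fun hd => h.ne (eq_of_le_of_dom_eq h.le hd)⟩,
    fun h => lt_of_le_of_ne h.1 (by rintro rfl; exact lt_irrefl _ h.2)⟩

theorem dom_lt_dom (h : s < t) : s.dom < t.dom := (lt_iff_le_and_dom_lt.1 h).2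

theorem le_of_le_of_dom_le (hs : s ≤ u) (ht : t ≤ u) (hd : s.dom ≤ t.dom) : s ≤ t :=
  ⟨hd, fun _ hβ => (apply_eq_of_le hs hβ).trans (apply_eq_of_le ht (hβ.trans_le hd)).symm⟩

def rng (t : Lambda) : Set ℕ := {m | ∃ β < t.dom, t.toFun β = m}

theorem rng_mono (h : s ≤ t) : s.rng ⊆ t.rng := by
  rintro m ⟨β, hβ, rfl⟩
  exact ⟨β, hβ.trans_le h.1, (apply_eq_of_le h hβ).symm⟩

noncomputable def restrict (t : Lambda) (θ : Ordinal.{0}) (hθ : θ ≤ t.dom) : Lambda where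
  toFun β := if β < θ then t.toFun β else 0
  dom := θ
  countable := (Ordinal.card_le_card hθ).trans t.countable
  inj β γ hβ hγ he := by
    simp only [if_pos hβ, if_pos hγ] at he
    exact t.inj β γ (hβ.trans_le hθ) (hγ.trans_le hθ) he
  coinfinite := t.coinfinite.mono fun n hn β hβ => by
    simpa only [if_pos hβ] using hn β (hβ.trans_le hθ)
  junk _ hβ := if_neg hβ

theorem restrict_lt (t : Lambda) {θ : Ordinal.{0}} (hθ : θ < t.dom) :
    t.restrict θ hθ.le < t :=
  lt_iff_le_and_dom_lt.2 ⟨⟨hθ.le, fun _ hβ => if_pos hβ⟩, hθ⟩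

noncomputable def extend (t : Lambda) (m : ℕ) (hm : m ∉ t.rng) : Lambda where
  toFun β := if β = t.dom then m else t.toFun β
  dom := t.dom + 1
  countable := by
    rw [Ordinal.card_add_one]
    exact Cardinal.add_le_aleph0.2 ⟨t.countable, Cardinal.one_le_aleph0⟩
  inj β γ hβ hγ he := by
    rw [Order.lt_add_one_iff] at hβ hγ
    rcases hβ.eq_or_lt with rfl | hβ <;> rcases hγ.eq_or_lt with rfl | hγ
    · rfl
    · simp only [if_neg hγ.ne] at he
      exact absurd ⟨γ, hγ, he.symm⟩ hm
    · simp only [if_neg hβ.ne] at he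
      exact absurd ⟨β, hβ, he⟩ hm
    · simp only [if_neg hβ.ne, if_neg hγ.ne] at he
      exact t.inj β γ hβ hγ he
  coinfinite := (t.coinfinite.sdiff (Set.finite_singleton m)).mono <| by
    rintro n ⟨hn, hnm⟩ β hβ
    rw [Order.lt_add_one_iff] at hβ
    rcases hβ.eq_or_lt with rfl | hβ
    · simpa [eq_comm] using hnm
    · simpa only [if_neg hβ.ne] using hn β hβ
  junk β hβ := by
    rw [Order.lt_add_one_iff, not_le] at hβ
    simpa only [if_neg hβ.ne'] using t.junk β hβ.not_gt

variable {m : ℕ} {hm : m ∉ t.rng}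

theorem extend_apply_dom : (t.extend m hm).toFun t.dom = m := if_pos rfl

theorem lt_extend : t < t.extend m hm :=
  lt_iff_le_and_dom_lt.2 ⟨⟨(lt_add_one _).le, fun _ hβ => (if_neg hβ.ne).symm⟩, lt_add_one _⟩

theorem rng_extend : (t.extend m hm).rng = insert m t.rng := by
  ext n
  constructor
  · rintro ⟨β, hβ, rfl⟩
    rcases (Order.lt_add_one_iff.1 hβ).eq_or_lt with rfl | hβ
    · exact .inl extend_apply_dom
    · exact .inr ⟨β, hβ, (if_neg hβ.ne).symm⟩
  · rintro (rfl | hn)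
    · exact ⟨t.dom, lt_add_one _, extend_apply_dom⟩
    · exact rng_mono lt_extend.le hn

instance : OrderBot Lambda where
  bot :=
    { toFun := fun _ => 0
      dom := 0
      countable := by simp
      inj := fun _ _ h => absurd h not_lt_zero
      coinfinite := Set.infinite_univ.mono fun _ _ _ h => absurd h not_lt_zero
      junk := fun _ _ => rfl }
  bot_le _ := ⟨zero_le, fun _ h => absurd h not_lt_zero⟩

section ChainSup

variable {f : ℕ → Lambda}

theorem apply_eq_of_monotone (hf : Monotone f) {j k : ℕ} {β : Ordinal.{0}} (hj : β < (f j).dom)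
    (hk : β < (f k).dom) : (f j).toFun β = (f k).toFun β := by
  rcases le_total j k with h | h
  · exact apply_eq_of_le (hf h) hj
  · exact (apply_eq_of_le (hf h) hk).symm

open Classical in
noncomputable def chainFun (f : ℕ → Lambda) (β : Ordinal.{0}) : ℕ :=
  if h : ∃ k, β < (f k).dom then (f h.choose).toFun β else 0

theorem chainFun_eq (hf : Monotone f) {k : ℕ} {β : Ordinal.{0}} (hβ : β < (f k).dom) :
    chainFun f β = (f k).toFun β := by
  have h : ∃ k, β < (f k).dom := ⟨k, hβ⟩
  rw [chainFun, dif_pos h]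
  exact apply_eq_of_monotone hf h.choose_spec hβ

noncomputable def chainSup (hf : Monotone f) (hE : (⋃ k, (f k).rng)ᶜ.Infinite) : Lambda where
  toFun := chainFun f
  dom := ⨆ k, (f k).dom
  countable := Ordinal.card_iSup_le Cardinal.mk_le_aleph0 fun k => (f k).countable
  inj β γ hβ hγ he := by
    obtain ⟨j, hj⟩ := Ordinal.lt_iSup_iff.1 hβ
    obtain ⟨k, hk⟩ := Ordinal.lt_iSup_iff.1 hγ
    have hjk : β < (f (max j k)).dom := hj.trans_le (hf (le_max_left j k)).1
    have hkj : γ < (f (max j k)).dom := hk.trans_le (hf (le_max_right j k)).1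
    rw [chainFun_eq hf hjk, chainFun_eq hf hkj] at he
    exact (f (max j k)).inj β γ hjk hkj he
  coinfinite := hE.mono fun n hn β hβ he => by
    obtain ⟨k, hk⟩ := Ordinal.lt_iSup_iff.1 hβ
    exact hn (Set.mem_iUnion.2 ⟨k, β, hk, (chainFun_eq hf hk).symm.trans he⟩)
  junk β hβ := dif_neg fun ⟨k, hk⟩ => hβ (hk.trans_le (Ordinal.le_iSup _ k))

variable (hf : Monotone f) (hE : (⋃ k, (f k).rng)ᶜ.Infinite)

theorem le_chainSup (k : ℕ) : f k ≤ chainSup hf hE :=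
  ⟨Ordinal.le_iSup _ k, fun _ hβ => (chainFun_eq hf hβ).symm⟩

theorem lt_chainSup_dom_iff {β : Ordinal.{0}} :
    β < (chainSup hf hE).dom ↔ ∃ k, β < (f k).dom :=
  Ordinal.lt_iSup_iff

theorem rng_chainSup_subset : (chainSup hf hE).rng ⊆ ⋃ k, (f k).rng := by
  rintro _ ⟨β, hβ, rfl⟩
  obtain ⟨k, hk⟩ := (lt_chainSup_dom_iff hf hE).1 hβ
  exact Set.mem_iUnion.2 ⟨k, β, hk, (apply_eq_of_le (le_chainSup hf hE k) hk)⟩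

end ChainSup

end Lambda

/-- The extra least element `0` gets domain `0`, like the empty function, so `optDom r < dom s`
is sufficient but not necessary for `r ≺ s`. -/
def optDom : Option Lambda → Ordinal.{0}
  | none => 0
  | some r => r.dom

theorem precLt_of_optDom_lt {r : Option Lambda} {s t : Lambda} (hr : precLt r t) (hs : s ≤ t)
    (h : optDom r < s.dom) : precLt r s := by
  cases r with
  | none => trivial
  | some r =>
    have hr : r < t := hr
    exact Lambda.lt_iff_le_and_dom_lt.2 ⟨Lambda.le_of_le_of_dom_le hr.le hs h.le, h⟩

theorem optDom_lt_dom {r : Option Lambda} {t : Lambda} (hr : precLt r t) (ht : 0 < t.dom) :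
    optDom r < t.dom := by
  cases r with
  | none => exact ht
  | some r => exact Lambda.dom_lt_dom hr

theorem lamIoc_subset_or_subset {r₁ r₂ : Option Lambda} {t : Lambda} (h₁ : precLt r₁ t)
    (h₂ : precLt r₂ t) : lamIoc r₁ t ⊆ lamIoc r₂ t ∨ lamIoc r₂ t ⊆ lamIoc r₁ t := by
  have key : ∀ {a b : Lambda}, a ≤ b → lamIoc (some b) t ⊆ lamIoc (some a) t :=
    fun hab s hs => ⟨hab.trans_lt hs.1, hs.2⟩
  cases r₁ with
  | none => exact .inr fun s hs => ⟨trivial, hs.2⟩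
  | some a =>
    cases r₂ with
    | none => exact .inl fun s hs => ⟨trivial, hs.2⟩
    | some b =>
      have h₁ : a < t := h₁
      have h₂ : b < t := h₂
      rcases le_total a.dom b.dom with h | h
      · exact .inr (key (Lambda.le_of_le_of_dom_le h₁.le h₂.le h))
      · exact .inl (key (Lambda.le_of_le_of_dom_le h₂.le h₁.le h))

section Walk

variable {f g : Ordinal.{0} → ℕ} {δ γ β : Ordinal.{0}}

def minSet (f : Ordinal.{0} → ℕ) (δ β : Ordinal.{0}) : Set Ordinal.{0} :=
  {ξ | δ ≤ ξ ∧ ξ < β ∧ ∀ η, δ ≤ η → η < β → f ξ ≤ f η}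

theorem minPos_mem (h : δ < β) : minPos f δ β ∈ minSet f δ β := by
  refine csInf_mem (s := minSet f δ β) ⟨Function.argminOn f (Set.Ico δ β) ⟨δ, le_rfl, h⟩, ?_⟩
  obtain ⟨h₁, h₂⟩ := Function.argminOn_mem f (Set.Ico δ β) ⟨δ, le_rfl, h⟩
  exact ⟨h₁, h₂, fun η h₁ h₂ => Function.argminOn_le f (Set.Ico δ β) (a := η) ⟨h₁, h₂⟩⟩

theorem minPos_le {ξ : Ordinal.{0}} (hξ : ξ ∈ minSet f δ β) : minPos f δ β ≤ ξ :=
  csInf_le (OrderBot.bddBelow _) hξ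

theorem minPos_eq_self (h : δ < β) (hmin : ∀ η, δ ≤ η → η < β → f δ ≤ f η) :
    minPos f δ β = δ :=
  le_antisymm (minPos_le ⟨le_rfl, h, hmin⟩) (minPos_mem h).1

theorem minPos_eq_minPos (hδγ : δ ≤ γ) (hγβ : γ < β)
    (h : ∀ ξ, δ ≤ ξ → ξ < γ → f (minPos f γ β) < f ξ) : minPos f δ β = minPos f γ β := by
  obtain ⟨hγη, hηβ, hmin⟩ := minPos_mem (f := f) hγβ
  refine le_antisymm (minPos_le ⟨hδγ.trans hγη, hηβ, fun ζ hδζ hζβ => ?_⟩) ?_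
  · rcases lt_or_ge ζ γ with hζγ | hγζ
    · exact (h ζ hδζ hζγ).le
    · exact hmin ζ hγζ hζβ
  · obtain ⟨hδζ, hζβ, hζmin⟩ := minPos_mem (f := f) (hδγ.trans_lt hγβ)
    rcases lt_or_ge (minPos f δ β) γ with hζγ | hγζ
    · exact absurd (hζmin _ (hδγ.trans hγη) hηβ) (h _ hδζ hζγ).not_ge
    · exact minPos_le ⟨hγζ, hζβ, fun η hγη _ => hζmin η (hδγ.trans hγη) ‹_›⟩

theorem tauFrom_of_lt (h : δ < β) :
    tauFrom δ f β = tauFrom δ f (minPos f δ β) ++ [minPos f δ β] := by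
  rw [tauFrom, WellFounded.fix_eq, dif_pos h]

theorem tauFrom_of_le (h : β ≤ δ) : tauFrom δ f β = [] := by
  rw [tauFrom, WellFounded.fix_eq, dif_neg h.not_gt]

theorem tauFrom_congr (hfg : ∀ ξ, δ ≤ ξ → ξ < β → f ξ = g ξ) : tauFrom δ f β = tauFrom δ g β := by
  induction β using WellFoundedLT.induction with
  | _ β IH =>
    rcases lt_or_ge δ β with h | h
    · have hpos : minPos f δ β = minPos g δ β := by
        have : minSet f δ β = minSet g δ β := by
          ext ξ
          constructor <;> rintro ⟨h₁, h₂, h₃⟩ <;> refine ⟨h₁, h₂, fun η hη₁ hη₂ => ?_⟩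
          · simpa only [hfg ξ h₁ h₂, hfg η hη₁ hη₂] using h₃ η hη₁ hη₂
          · simpa only [← hfg ξ h₁ h₂, ← hfg η hη₁ hη₂] using h₃ η hη₁ hη₂
        exact congrArg sInf this
      have hlt := minPos_lt f h
      rw [tauFrom_of_lt h, tauFrom_of_lt h, hpos,
        IH _ (hpos ▸ hlt) fun ξ h₁ h₂ => hfg ξ h₁ (h₂.trans (hpos ▸ hlt))]
    · rw [tauFrom_of_le h, tauFrom_of_le h]

theorem tauFrom_split (hδγ : δ ≤ γ) (hγβ : γ ≤ β)
    (h : ∀ ξ, δ ≤ ξ → ξ < γ → ∀ p ∈ tauFrom γ f β, f p < f ξ) :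
    tauFrom δ f β = tauFrom δ f γ ++ tauFrom γ f β := by
  induction β using WellFoundedLT.induction with
  | _ β IH =>
    rcases hγβ.lt_or_eq with hγβ | rfl
    · have hstep := tauFrom_of_lt (f := f) hγβ
      have hη : minPos f δ β = minPos f γ β := minPos_eq_minPos hδγ hγβ fun ξ h₁ h₂ =>
        h ξ h₁ h₂ _ (hstep ▸ List.mem_append_right _ (List.mem_singleton_self _))
      rw [tauFrom_of_lt (hδγ.trans_lt hγβ), hη, hstep, ← List.append_assoc,
        ← IH _ (minPos_lt f hγβ) (minPos_mem hγβ).1 fun ξ h₁ h₂ p hp =>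
          h ξ h₁ h₂ p (hstep ▸ List.mem_append_left _ hp)]
    · rw [tauFrom_of_le le_rfl, List.append_nil]

end Walk

open Lambda

theorem ell_self (t : Lambda) : ell t t = 0 := by
  rw [ell, tau, tauFrom_of_le le_rfl, List.length_nil]

def OneStep (s t : Lambda) : Prop :=
  s < t ∧ ∀ η, s.dom ≤ η → η < t.dom → t.toFun s.dom ≤ t.toFun η

theorem OneStep.ell_eq_one {s t : Lambda} (h : OneStep s t) : ell s t = 1 := by
  have hd := dom_lt_dom h.1
  rw [ell, tau, tauFrom_of_lt hd, minPos_eq_self hd h.2, tauFrom_of_le le_rfl, List.nil_append,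
    List.length_singleton]

theorem OneStep.trans {x y u : Lambda} (hxy : OneStep x y) (hyu : OneStep y u)
    (h : u.toFun x.dom ≤ u.toFun y.dom) : OneStep x u := by
  refine ⟨hxy.1.trans hyu.1, fun η hxη hηu => ?_⟩
  rcases lt_or_ge η y.dom with hηy | hyη
  · rw [← apply_eq_of_le hyu.1.le (dom_lt_dom hxy.1), ← apply_eq_of_le hyu.1.le hηy]
    exact hxy.2 η hxη hηy
  · exact h.trans (hyu.2 η hyη hηu)

/-- `θ` is chosen above the finitely many `ξ < dom t` (`t` is injective) at which `t` is at most
the largest value of `t'` along `τ(t, t')`; beyond `θ`, `tauFrom_split` applies. -/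
theorem exists_ell_add_of_lt {t t' : Lambda} (h : t < t') {θ₀ : Ordinal.{0}} (hθ₀ : θ₀ < t.dom) :
    ∃ θ, θ₀ ≤ θ ∧ θ < t.dom ∧ ∀ s ≤ t, θ < s.dom → ell s t' = ell s t + ell t t' := by
  set M := (tau t t').toFinset.sup t'.toFun
  have hA : {ξ | ξ < t.dom ∧ t.toFun ξ ≤ M}.Finite :=
    Set.Finite.of_finite_image ((Set.finite_Iic M).subset (by rintro _ ⟨ξ, hξ, rfl⟩; exact hξ.2))
      fun a ha b hb => t.inj a b ha.1 hb.1
  refine ⟨max θ₀ (hA.toFinset.sup id), le_max_left _ _,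
    max_lt hθ₀ ((Finset.sup_lt_iff (bot_le.trans_lt hθ₀)).2 fun ξ hξ => (hA.mem_toFinset.1 hξ).1),
    fun s hs hθs => ?_⟩
  have hsplit : tauFrom s.dom t'.toFun t'.dom = tauFrom s.dom t'.toFun t.dom ++ tau t t' := by
    refine tauFrom_split hs.1 h.le.1 fun ξ hsξ hξt p hp => ?_
    by_contra hle
    have hξA : ξ ∈ hA.toFinset := hA.mem_toFinset.2 ⟨hξt, by
      rw [apply_eq_of_le h.le hξt]
      exact (not_lt.1 hle).trans (Finset.le_sup (List.mem_toFinset.2 hp))⟩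
    exact (hθs.trans_le hsξ).not_ge ((Finset.le_sup (f := id) hξA).trans (le_max_right _ _))
  rw [ell, ell, ell, tau, hsplit, List.length_append, tau,
    tauFrom_congr fun ξ _ hξ => (apply_eq_of_le h.le hξ).symm]
  rfl

theorem Wset_mono {r r' : Option Lambda} {t : Lambda} {i : ℤˣ} (h : lamIoc r t ⊆ lamIoc r' t) :
    Wset r t i ⊆ Wset r' t i :=
  fun _ hq => ⟨h hq.1, hq.2⟩

theorem neg_mem_Wset {r : Option Lambda} {s t : Lambda} {i : ℤˣ} (hs : s ∈ lamIoc r t)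
    (h : OneStep s t) : (s, -i) ∈ Wset r t i :=
  ⟨hs, by rw [h.ell_eq_one, pow_one, neg_one_mul]⟩

theorem exists_Wset_subset_of_mem_Wset {r₀ : Option Lambda} {t₀ t : Lambda} {i₀ i : ℤˣ}
    (hr₀ : precLt r₀ t₀) (h : (t, i) ∈ Wset r₀ t₀ i₀) :
    ∃ r, precLt r t ∧ Wset r t i ⊆ Wset r₀ t₀ i₀ := by
  obtain ⟨⟨hr₀t, htt₀ : t ≤ t₀⟩, hi : i = _⟩ := h
  rcases htt₀.eq_or_lt with rfl | hlt
  · rw [ell_self, pow_zero, one_mul] at hi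
    exact ⟨r₀, hr₀t, hi ▸ subset_rfl⟩
  rcases (zero_le (a := t.dom)).eq_or_lt with ht | ht
  · refine ⟨none, trivial, ?_⟩
    rintro ⟨s, j⟩ ⟨⟨-, hst : s ≤ t⟩, hj : j = _⟩
    obtain rfl := eq_of_le_of_dom_eq hst (le_antisymm hst.1 (ht ▸ zero_le))
    rw [hj, ell_self, pow_zero, one_mul]
    exact ⟨⟨hr₀t, htt₀⟩, hi⟩
  obtain ⟨θ, hr₀θ, hθt, hell⟩ := exists_ell_add_of_lt hlt (optDom_lt_dom hr₀t ht)
  refine ⟨some (t.restrict θ hθt.le), t.restrict_lt hθt, ?_⟩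
  rintro ⟨s, j⟩ ⟨⟨hθs, hst : s ≤ t⟩, hj : j = _⟩
  replace hθs : θ < s.dom := dom_lt_dom hθs
  refine ⟨⟨precLt_of_optDom_lt hr₀ (hst.trans htt₀) (hr₀θ.trans_lt hθs), hst.trans htt₀⟩, ?_⟩
  rw [hj, hi, hell s hst hθs, pow_add, mul_assoc]

theorem exists_Wset_subset_of_isOpen {V : Set Dup} (hV : IsOpen V) {t : Lambda} {i : ℤˣ}
    (h : (t, i) ∈ V) : ∃ r, precLt r t ∧ Wset r t i ⊆ V := by
  induction hV generalizing t i with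
  | basic S hS =>
    obtain ⟨r₀, t₀, i₀, hr₀, rfl⟩ := hS
    exact exists_Wset_subset_of_mem_Wset hr₀ h
  | univ => exact ⟨none, trivial, Set.subset_univ _⟩
  | inter V₁ V₂ _ _ IH₁ IH₂ =>
    obtain ⟨r₁, hr₁, h₁⟩ := IH₁ h.1
    obtain ⟨r₂, hr₂, h₂⟩ := IH₂ h.2
    rcases lamIoc_subset_or_subset hr₁ hr₂ with h₁₂ | h₂₁
    · exact ⟨r₁, hr₁, fun q hq => ⟨h₁ hq, h₂ (Wset_mono h₁₂ hq)⟩⟩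
    · exact ⟨r₂, hr₂, fun q hq => ⟨h₁ (Wset_mono h₂₁ hq), h₂ hq⟩⟩
  | sUnion 𝒮 _ IH =>
    obtain ⟨S, hS, hq⟩ := h
    obtain ⟨r, hr, hsub⟩ := IH S hS hq
    exact ⟨r, hr, hsub.trans (Set.subset_sUnion_of_mem hS)⟩

/-- `pool` holds the values that later extensions of `T` may use. -/
structure Stage where
  T : Lambda
  pool : Set ℕ

namespace Stage

variable (Req : ℕ → Lambda → Prop) (bound : Lambda → Lambda → ℕ)

def Valid (s : Stage) : Prop := s.pool.Infinite ∧ ∀ q ∈ s.pool, q ∉ s.T.rng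

def Admissible (s : Stage) (v : Lambda) : Prop :=
  s.T ≤ v ∧ (∀ β, s.T.dom ≤ β → β < v.dom → v.toFun β ∈ s.pool) ∧ (s.pool \ v.rng).Infinite

open Classical in
noncomputable def adopt (s : Stage) (k : ℕ) : Lambda :=
  if h : ∃ v, s.T < v ∧ s.Admissible v ∧ Req k v then h.choose else s.T

def fresh (s : Stage) (k : ℕ) : Set ℕ :=
  {q | q ∈ s.pool ∧ q ∉ (s.adopt Req k).rng ∧ bound s.T (s.adopt Req k) < q}

noncomputable def newVal (s : Stage) (k : ℕ) : ℕ := Nat.nth (· ∈ s.fresh Req bound k) 0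

noncomputable def retired (s : Stage) (k : ℕ) : ℕ := Nat.nth (· ∈ s.fresh Req bound k) 1

open Classical in
/-- The second fresh value is retired for good: this keeps infinitely many values out of the
final element. -/
noncomputable def next (s : Stage) (k : ℕ) : Stage :=
  if h : s.newVal Req bound k ∈ s.fresh Req bound k then
    ⟨(s.adopt Req k).extend _ h.2.1, {q ∈ s.fresh Req bound k | s.retired Req bound k < q}⟩
  else s

noncomputable def seq : ℕ → Stage
  | 0 => ⟨⊥, Set.univ⟩
  | k + 1 => (seq k).next Req bound k

variable {Req bound}

theorem adopt_spec {s : Stage} {k : ℕ} (h : ∃ v, s.T < v ∧ s.Admissible v ∧ Req k v) :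
    s.T < s.adopt Req k ∧ Req k (s.adopt Req k) := by
  rw [adopt, dif_pos h]
  exact ⟨h.choose_spec.1, h.choose_spec.2.2⟩

section Step

variable {s : Stage} (hs : s.Valid) (k : ℕ)
include hs

theorem admissible_adopt : s.Admissible (s.adopt Req k) := by
  unfold adopt
  split_ifs with h
  · exact h.choose_spec.2.1
  · refine ⟨le_rfl, fun β h₁ h₂ => absurd h₂ h₁.not_gt, ?_⟩
    exact hs.1.mono fun q hq => ⟨hq, hs.2 q hq⟩

theorem fresh_infinite : (s.fresh Req bound k).Infinite :=
  ((admissible_adopt hs k).2.2.sep_lt _).mono fun _ hq => ⟨hq.1.1, hq.1.2, hq.2⟩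

theorem newVal_mem : s.newVal Req bound k ∈ s.fresh Req bound k :=
  Nat.nth_mem_of_infinite (fresh_infinite hs k) 0

theorem retired_mem : s.retired Req bound k ∈ s.fresh Req bound k :=
  Nat.nth_mem_of_infinite (fresh_infinite hs k) 1

theorem newVal_lt_retired : s.newVal Req bound k < s.retired Req bound k :=
  Nat.nth_strictMono (fresh_infinite hs k) zero_lt_one

theorem next_eq : s.next Req bound k =
    ⟨(s.adopt Req k).extend _ (newVal_mem (bound := bound) hs k).2.1,
      {q ∈ s.fresh Req bound k | s.retired Req bound k < q}⟩ :=
  dif_pos (newVal_mem hs k)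

theorem valid_next : (s.next Req bound k).Valid := by
  rw [next_eq hs k]
  refine ⟨(fresh_infinite hs k).sep_lt _, fun q hq hqT => ?_⟩
  dsimp only at hq hqT
  rw [Lambda.rng_extend] at hqT
  rcases hqT with rfl | hqT
  · exact (newVal_lt_retired hs k).not_gt hq.2
  · exact hq.1.2.1 hqT

theorem adopt_lt_next : s.adopt Req k < (s.next Req bound k).T := by
  rw [next_eq hs k]
  dsimp only
  exact Lambda.lt_extend

theorem T_lt_next : s.T < (s.next Req bound k).T :=
  (admissible_adopt hs k).1.trans_lt (adopt_lt_next hs k)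

theorem next_dom : (s.next Req bound k).T.dom = (s.adopt Req k).dom + 1 := by
  rw [next_eq hs k]
  rfl

theorem next_apply_adopt_dom :
    (s.next Req bound k).T.toFun (s.adopt Req k).dom = s.newVal Req bound k := by
  rw [next_eq hs k]
  dsimp only
  exact Lambda.extend_apply_dom

theorem next_apply_mem_pool {β : Ordinal.{0}} (h₁ : s.T.dom ≤ β)
    (h₂ : β < (s.next Req bound k).T.dom) : (s.next Req bound k).T.toFun β ∈ s.pool := by
  rw [next_dom hs k, Order.lt_add_one_iff] at h₂
  rcases h₂.eq_or_lt with rfl | h₂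
  · rw [next_apply_adopt_dom hs k]
    exact (newVal_mem hs k).1
  · rw [← apply_eq_of_le (adopt_lt_next hs k).le h₂]
    exact (admissible_adopt hs k).2.1 β h₁ h₂

theorem next_pool_subset : (s.next Req bound k).pool ⊆ s.pool := by
  rw [next_eq hs k]
  exact fun q hq => hq.1.1

theorem newVal_lt_of_mem_next_pool {q : ℕ} (hq : q ∈ (s.next Req bound k).pool) :
    s.newVal Req bound k < q := by
  rw [next_eq hs k] at hq
  exact (newVal_lt_retired hs k).trans hq.2

theorem retired_not_mem_next_pool : s.retired Req bound k ∉ (s.next Req bound k).pool := by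
  rw [next_eq hs k]
  exact fun h => lt_irrefl _ h.2

theorem retired_not_mem_next_rng : s.retired Req bound k ∉ (s.next Req bound k).T.rng := by
  rw [next_eq hs k]
  dsimp only
  rw [Lambda.rng_extend]
  rintro (h | h)
  · exact (newVal_lt_retired hs k).ne' h
  · exact (retired_mem hs k).2.1 h

end Step

variable {k j : ℕ}

theorem seq_valid : ∀ k, (seq Req bound k).Valid
  | 0 => ⟨Set.infinite_univ, fun _ _ ⟨_, hβ, _⟩ => not_lt_zero hβ⟩
  | k + 1 => valid_next (seq_valid k) k

theorem strictMono_seq_T : StrictMono fun k => (seq Req bound k).T :=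
  strictMono_nat_of_lt_succ fun k => T_lt_next (seq_valid k) k

theorem antitone_seq_pool : Antitone fun k => (seq Req bound k).pool :=
  antitone_nat_of_succ_le fun k => next_pool_subset (seq_valid k) k

theorem seq_apply_mem_pool {β : Ordinal.{0}} (hβ : (seq Req bound k).T.dom ≤ β) :
    ∀ j, β < (seq Req bound j).T.dom → (seq Req bound j).T.toFun β ∈ (seq Req bound k).pool
  | 0, h => absurd h not_lt_zero
  | j + 1, h => by
    rcases lt_or_ge β (seq Req bound j).T.dom with hj | hj
    · rw [← apply_eq_of_le (strictMono_seq_T (Nat.lt_succ_self j)).le hj]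
      exact seq_apply_mem_pool hβ j hj
    · have hkj : k ≤ j := by
        by_contra! hjk
        exact (h.trans_le (strictMono_seq_T.monotone hjk).1).not_ge hβ
      exact antitone_seq_pool hkj (next_apply_mem_pool (seq_valid j) j hj h)

theorem retired_not_mem_seq_rng :
    (seq Req bound k).retired Req bound k ∉ (seq Req bound j).T.rng := by
  rintro ⟨β, hβ, he⟩
  rcases lt_or_ge β (seq Req bound (k + 1)).T.dom with h | h
  · refine retired_not_mem_next_rng (seq_valid k) k ⟨β, h, ?_⟩
    rw [← he]
    exact apply_eq_of_monotone strictMono_seq_T.monotone h hβ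
  · exact retired_not_mem_next_pool (seq_valid k) k (he ▸ seq_apply_mem_pool h j hβ)

theorem retired_ne_retired (hjk : j < k) :
    (seq Req bound j).retired Req bound j ≠ (seq Req bound k).retired Req bound k :=
  fun h => retired_not_mem_next_pool (seq_valid j) j
    (h ▸ antitone_seq_pool hjk (retired_mem (seq_valid k) k).1)

theorem injective_retired :
    Function.Injective fun k => (seq Req bound k).retired Req bound k :=
  Function.Injective.of_lt_imp_ne fun _ _ => retired_ne_retired

theorem compl_iUnion_seq_rng_infinite : (⋃ j, (seq Req bound j).T.rng)ᶜ.Infinite :=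
  (Set.infinite_range_of_injective injective_retired).mono <| by
    rintro _ ⟨k, rfl⟩
    simpa using fun j => retired_not_mem_seq_rng (j := j)

variable (Req bound) in
noncomputable def limit : Lambda :=
  Lambda.chainSup strictMono_seq_T.monotone
    (compl_iUnion_seq_rng_infinite (Req := Req) (bound := bound))

theorem seq_le_limit : (seq Req bound k).T ≤ limit Req bound := Lambda.le_chainSup _ _ k

theorem seq_lt_limit : (seq Req bound k).T < limit Req bound :=
  (strictMono_seq_T (Nat.lt_succ_self k)).trans_le seq_le_limit

theorem limit_apply_mem_pool {β : Ordinal.{0}} (h₁ : (seq Req bound k).T.dom ≤ β)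
    (h₂ : β < (limit Req bound).dom) : (limit Req bound).toFun β ∈ (seq Req bound k).pool := by
  obtain ⟨j, hj⟩ := (Lambda.lt_chainSup_dom_iff _ _).1 h₂
  rw [← apply_eq_of_le seq_le_limit hj]
  exact seq_apply_mem_pool h₁ j hj

theorem admissible_limit : (seq Req bound k).Admissible (limit Req bound) := by
  refine ⟨seq_le_limit, fun β h₁ h₂ => limit_apply_mem_pool h₁ h₂, ?_⟩
  refine Set.infinite_of_injective_forall_mem
    (f := fun m => (seq Req bound (k + m)).retired Req bound (k + m)) (injective_retired.comp (add_right_injective k)) fun m => ⟨?_, fun h => ?_⟩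
  · exact antitone_seq_pool (Nat.le_add_right k m) (retired_mem (seq_valid _) _).1
  · obtain ⟨j, hj⟩ := Set.mem_iUnion.1 (Lambda.rng_chainSup_subset _ _ h)
    exact retired_not_mem_seq_rng hj

theorem limit_apply_adopt_dom :
    (limit Req bound).toFun ((seq Req bound k).adopt Req k).dom =
      (seq Req bound k).newVal Req bound k := by
  rw [← apply_eq_of_le (seq_le_limit (k := k + 1)) (dom_lt_dom (adopt_lt_next (seq_valid k) k))]
  exact next_apply_adopt_dom (seq_valid k) k

theorem oneStep_adopt_limit : OneStep ((seq Req bound k).adopt Req k) (limit Req bound) := by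
  refine ⟨(adopt_lt_next (seq_valid k) k).trans_le (seq_le_limit (k := k + 1)),
    fun η h₁ h₂ => ?_⟩
  rw [limit_apply_adopt_dom]
  rcases h₁.eq_or_lt with rfl | h₁
  · rw [limit_apply_adopt_dom]
  · refine (newVal_lt_of_mem_next_pool (seq_valid k) k (limit_apply_mem_pool (k := k + 1) ?_ h₂)).le
    rw [seq, next_dom (seq_valid k) k]
    exact Order.add_one_le_of_lt h₁

end Stage

/-- Requirements are scheduled so that each recurs at arbitrarily late stages; whenever the final
element `U` meets one, so does an element adopted at each of its stages, since `U` itself is then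
an admissible candidate there. -/
theorem exists_limit_meeting_requirements {β : Type*} [Countable β] [Nonempty β]
    (Req : β → Lambda → Prop) (bound : Lambda → Lambda → ℕ) :
    ∃ (U : Lambda) (T v : ℕ → Lambda), Monotone T ∧ (∀ o < U.dom, ∃ k, o < (T k).dom) ∧
      (∀ k, OneStep (v k) U ∧ bound (T k) (v k) < U.toFun (v k).dom) ∧
      ∀ b k₀, Req b U → ∃ k ≥ k₀, T k < v k ∧ Req b (v k) := by
  obtain ⟨g, hg⟩ := exists_seq_forall_exists_ge_eq β
  let Req' k := Req (g k)
  refine ⟨Stage.limit Req' bound, fun k => (Stage.seq Req' bound k).T,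
    fun k => (Stage.seq Req' bound k).adopt Req' k, Stage.strictMono_seq_T.monotone,
    fun o ho => (Lambda.lt_chainSup_dom_iff _ _).1 ho, fun k => ⟨Stage.oneStep_adopt_limit, ?_⟩,
    fun b k₀ hb => ?_⟩
  · rw [Stage.limit_apply_adopt_dom]
    exact (Stage.newVal_mem (Stage.seq_valid k) k).2.2
  · obtain ⟨k, hk, rfl⟩ := hg b k₀
    exact ⟨k, hk, Stage.adopt_spec ⟨_, Stage.seq_lt_limit, Stage.admissible_limit, hb⟩⟩

def CofinalSteps {α : Type*} (c : Lambda → α) (p : α) (v : Lambda) : Prop :=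
  ∀ γ < v.dom, ∃ x, OneStep x v ∧ γ < x.dom ∧ c x = p

theorem exists_monochromatic_oneStep_triple {α : Type*} [Countable α] (c : Lambda → α)
    (r : Lambda → Option Lambda) (hr : ∀ t, precLt (r t) t) :
    ∃ x y u : Lambda, c x = c u ∧ c y = c u ∧ OneStep x y ∧ OneStep x u ∧ OneStep y u ∧
      x ∈ lamIoc (r y) y ∧ x ∈ lamIoc (r u) u ∧ y ∈ lamIoc (r u) u := by
  classical
  have : Nonempty α := ⟨c ⊥⟩
  -- Forcing `U` to be larger at `dom y` than at `dom x` makes the walk from `U` to `x` skip `y`.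
  let bound : Lambda → Lambda → ℕ := fun T y =>
    if h : ∃ x, OneStep x y ∧ max (optDom (r y)) T.dom < x.dom ∧ c x = c y then
      y.toFun h.choose.dom
    else 0
  obtain ⟨U, T, v, hT, hcof, hv, hstage⟩ := exists_limit_meeting_requirements
    (fun (b, p) w => c w = p ∧ (b = true → CofinalSteps c p w)) bound
  have hU : CofinalSteps c (c U) U := fun γ hγ => by
    obtain ⟨k₀, hk₀⟩ := hcof γ hγ
    obtain ⟨k, hk, hTv, hc, -⟩ := hstage (false, c U) k₀ ⟨rfl, nofun⟩
    exact ⟨v k, (hv k).1, hk₀.trans_le ((hT hk).1.trans (dom_lt_dom hTv).le), hc⟩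
  obtain ⟨k₀, hk₀⟩ := hcof _ (optDom_lt_dom (hr U) (zero_le.trans_lt (dom_lt_dom (hv 0).1.1)))
  obtain ⟨k, hk, hTy, hcy, hy⟩ := hstage (true, c U) k₀ ⟨rfl, fun _ => hU⟩
  have hex : ∃ x, OneStep x (v k) ∧ max (optDom (r (v k))) (T k).dom < x.dom ∧ c x = c (v k) := by
    obtain ⟨x, hxy, hγx, hcx⟩ := hy rfl _
      (max_lt (optDom_lt_dom (hr _) (zero_le.trans_lt (dom_lt_dom hTy))) (dom_lt_dom hTy))
    exact ⟨x, hxy, hγx, hcx.trans hcy.symm⟩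
  obtain ⟨hxy, hγx, hcx⟩ := hex.choose_spec
  have hbound : bound (T k) (v k) = (v k).toFun hex.choose.dom := dif_pos hex
  have hxU : OneStep hex.choose U := hxy.trans (hv k).1 <| by
    rw [← apply_eq_of_le (hv k).1.1.le (dom_lt_dom hxy.1), ← hbound]
    exact (hv k).2.le
  have hrU : optDom (r U) < (T k).dom := hk₀.trans_le (hT hk).1
  refine ⟨hex.choose, v k, U, hcx.trans hcy, hcy, hxy, hxU, (hv k).1,
    ⟨?_, hxy.1.le⟩, ⟨?_, hxU.1.le⟩, ⟨?_, (hv k).1.1.le⟩⟩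
  · exact precLt_of_optDom_lt (hr _) hxy.1.le ((le_max_left _ _).trans_lt hγx)
  · exact precLt_of_optDom_lt (hr U) hxU.1.le (hrU.trans ((le_max_right _ _).trans_lt hγx))
  · exact precLt_of_optDom_lt (hr U) (hv k).1.1.le (hrU.trans (dom_lt_dom hTy))

/-- The `Λ`-duplicate `D` is not a Gruenhage space. -/
theorem dup_not_gruenhage : ¬ Gruenhage Dup := by
  rintro ⟨𝒰, R, hopen, hsep, hint⟩
  have htwin : ∀ t : Lambda, ∃ n, ∃ V ∈ 𝒰 n, ∃ i : ℤˣ, ((t, i) : Dup) ∈ V ∧ (t, -i) ∉ V := by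
    intro t
    have hne : ((t, 1) : Dup) ≠ (t, -1) := by simp [Units.ext_iff]
    obtain ⟨n, V, hV, z, hz⟩ := hsep _ _ hne
    rcases mem_or_mem_of_inter_eq_singleton hne hz with h | h
    · exact ⟨n, V, hV, 1, h⟩
    · exact ⟨n, V, hV, -1, by simpa using h⟩
  choose n V hV i hin hout using htwin
  choose r hr hrV using fun t => exists_Wset_subset_of_isOpen (hopen _ _ (hV t)) (hin t)
  obtain ⟨x, y, u, hxu, hyu, hxy, hxu', hyu', hxy_r, hxu_r, hyu_r⟩ :=
    exists_monochromatic_oneStep_triple (fun t => (n t, i t)) r hr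
  simp only [Prod.mk.injEq] at hxu hyu
  apply hout x
  rw [hxu.2]
  refine mem_of_pairwise_inter_eq (hint (n u)) (hxu.1 ▸ hV x) (hyu.1 ▸ hV y) (hV u)
    (q := (y, -i u)) ?_ (hrV u (neg_mem_Wset hxu_r hxu')) ?_ (hrV u (neg_mem_Wset hyu_r hyu'))
  · exact hyu.2 ▸ hrV y (neg_mem_Wset hxy_r hxy)
  · exact hyu.2 ▸ hout y
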